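/- If (RG)^- is anticommutative, then for all x, y ∈ G with x^* ≠ x and y^* ≠ y: (i) y^{-1}xy ∈ {x, x^*}, and in particular xy = x^*y^*; (ii) (xy)^* = xy if and only if xy = yx. -/

import Mathlib

open Finsupp

/-- The generalized oriented map σ* on the group ring RG. -/
noncomputable def sigmaStar {R : Type} [CommRing R] {G : Type} [Group G]
    (inv : G → G) (σ : G →* Rˣ) (α : MonoidAlgebra R G) : MonoidAlgebra R G :=
  MonoidAlgebra.ofCoeff (α.coeff.sum fun x a => Finsupp.single (inv x) ((σ x : R) * a))

/-- The set of skew-symmetric elements of RG under σ*. -/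
def skewSet {R : Type} [CommRing R] {G : Type} [Group G]
    (inv : G → G) (σ : G →* Rˣ) : Set (MonoidAlgebra R G) :=
  {α | sigmaStar inv σ α = -α}

/-! For `g ∉ G_*` the element `g - σ(g) g^*` is skew, so all coefficients of the anticommutator
of two such elements vanish; comparing them at well-chosen group elements decides which of the
eight products `gh, gh^*, g^*h, …, h^*g^*` coincide. Since `2 ≠ 0` in `R` (while `4 = 0` is
possible, and is in fact forced as soon as `G ≠ G_*`), neither a unit nor twice a unit vanishes,
and this first gives `g^* g = g g^*`, `g^{*2} = g^2` and `2σ(g)^2 = -2`. A longer analysis of the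
same kind yields the key identity `x^* y^* = x y` for all `x, y ∉ G_*`. Everything else is formal:
it gives `(xy)^* = yx`, and when `xy ∉ G_*` the key identity for the pair `(x, xy)` gives
`y x^* = x y`.

Lemma names write `star` for the involution `inv`. -/

variable {R : Type} [CommRing R] {G : Type} [Group G]

structure IsSkewAnticomm (inv : G → G) (σ : G →* Rˣ) : Prop where
  inv_mul : ∀ x y : G, inv (x * y) = inv y * inv x
  inv_inv : ∀ x : G, inv (inv x) = x
  mul_inv_mem_ker : ∀ x : G, x * inv x ∈ σ.ker
  anticomm : ∀ α ∈ skewSet inv σ, ∀ β ∈ skewSet inv σ, α * β + β * α = 0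

variable {inv : G → G} {σ : G →* Rˣ}

lemma sigmaStar_single (g : G) (a : R) :
    sigmaStar inv σ (MonoidAlgebra.single g a) =
      MonoidAlgebra.single (inv g) ((σ g : R) * a) := by
  simp [sigmaStar, ← MonoidAlgebra.ofCoeff_single]

lemma sigmaStar_add (α β : MonoidAlgebra R G) :
    sigmaStar inv σ (α + β) = sigmaStar inv σ α + sigmaStar inv σ β := by
  unfold sigmaStar
  rw [MonoidAlgebra.coeff_add, ← MonoidAlgebra.ofCoeff_add]
  congr 1
  exact Finsupp.sum_add_index' (fun a => by simp)
    (fun a b₁ b₂ => by rw [mul_add, Finsupp.single_add])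

lemma sigma_star_mul_sigma (hσ : ∀ x : G, x * inv x ∈ σ.ker) (g : G) :
    (σ (inv g) : R) * σ g = 1 := by
  have h := congrArg Units.val (hσ g)
  simpa [mul_comm] using h

lemma single_sub_single_mem_skewSet (hinv : ∀ x : G, inv (inv x) = x)
    (hσ : ∀ x : G, x * inv x ∈ σ.ker) (g : G) :
    MonoidAlgebra.single g 1 - MonoidAlgebra.single (inv g) (σ g : R) ∈ skewSet inv σ := by
  rw [skewSet, Set.mem_ofPred_eq, sub_eq_add_neg, sigmaStar_add, ← MonoidAlgebra.single_neg,
    sigmaStar_single, sigmaStar_single, hinv, mul_neg, sigma_star_mul_sigma hσ, mul_one]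
  simp only [MonoidAlgebra.single_neg]; abel

lemma single_mem_skewSet {z : G} (hz : inv z = z) (hσz : (σ z : R) = -1) :
    MonoidAlgebra.single z (1 : R) ∈ skewSet inv σ := by
  rw [skewSet, Set.mem_ofPred_eq, sigmaStar_single, hz, hσz, mul_one, MonoidAlgebra.single_neg]

namespace IsSkewAnticomm

/- The coefficient at `t` of the anticommutator of `g - σ(g) g^*` and `h - σ(h) h^*`. Below,
`yk` / `nk` records that the `k`-th group element of this sum is / is not `t`. -/
theorem coeff_anticomm [DecidableEq G] (H : IsSkewAnticomm inv σ) (g h t : G) :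
    (if g * h = t then (1 : R) else 0) - (if g * inv h = t then (σ h : R) else 0)
    - (if inv g * h = t then (σ g : R) else 0)
    + (if inv g * inv h = t then (σ g : R) * σ h else 0)
    + (if h * g = t then 1 else 0) - (if h * inv g = t then (σ g : R) else 0)
    - (if inv h * g = t then (σ h : R) else 0)
    + (if inv h * inv g = t then (σ h : R) * σ g else 0) = 0 := by
  have E := congrArg (fun α => α.coeff t) <| H.anticomm _
    (single_sub_single_mem_skewSet H.inv_inv H.mul_inv_mem_ker g) _
    (single_sub_single_mem_skewSet H.inv_inv H.mul_inv_mem_ker h)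
  simp only [sub_mul, mul_sub, MonoidAlgebra.single_mul_single, one_mul, mul_one,
    MonoidAlgebra.coeff_add, MonoidAlgebra.coeff_sub, MonoidAlgebra.coeff_single,
    MonoidAlgebra.coeff_zero, Finsupp.add_apply, Finsupp.sub_apply, Finsupp.single_apply,
    Finsupp.coe_zero, Pi.zero_apply] at E
  linear_combination E

theorem coeff_anticomm_single [DecidableEq G] (H : IsSkewAnticomm inv σ) {z : G}
    (hz : inv z = z) (hσz : (σ z : R) = -1) (g t : G) :
    (if z * g = t then (1 : R) else 0) - (if z * inv g = t then (σ g : R) else 0)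
    + (if g * z = t then 1 else 0) - (if inv g * z = t then (σ g : R) else 0) = 0 := by
  have E := congrArg (fun α => α.coeff t) <| H.anticomm _ (single_mem_skewSet hz hσz) _
    (single_sub_single_mem_skewSet H.inv_inv H.mul_inv_mem_ker g)
  simp only [sub_mul, mul_sub, MonoidAlgebra.single_mul_single, one_mul, mul_one,
    MonoidAlgebra.coeff_add, MonoidAlgebra.coeff_sub, MonoidAlgebra.coeff_single,
    MonoidAlgebra.coeff_zero, Finsupp.add_apply, Finsupp.sub_apply, Finsupp.single_apply,
    Finsupp.coe_zero, Pi.zero_apply] at E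
  linear_combination E

theorem star_mul_self_comm [DecidableEq G] (H : IsSkewAnticomm inv σ) (h2 : (2 : R) ≠ 0) {g : G}
    (hg : inv g ≠ g) : inv g * g = g * inv g := by
  by_contra hc
  have e := H.coeff_anticomm g g (g * inv g)
  rw [if_neg fun h => hg (mul_left_cancel h).symm, if_pos rfl, if_neg hc,
    if_neg fun h => hg (mul_right_cancel h)] at e
  exact h2 <| (Units.mul_left_eq_zero (σ g)).mp (by linear_combination -e)

theorem four_eq_zero [DecidableEq G] (H : IsSkewAnticomm inv σ) {g : G} (hg : inv g ≠ g) :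
    (4 : R) = 0 := by
  by_cases h2 : (2 : R) = 0
  · linear_combination 2 * h2
  have e := H.coeff_anticomm g g (g * inv g)
  rw [if_neg fun h => hg (mul_left_cancel h).symm, if_pos rfl,
    if_pos (H.star_mul_self_comm h2 hg), if_neg fun h => hg (mul_right_cancel h)] at e
  exact (Units.mul_left_eq_zero (σ g)).mp (by linear_combination -e)

theorem star_mul_star_self [DecidableEq G] (H : IsSkewAnticomm inv σ) (h2 : (2 : R) ≠ 0) {g : G}
    (hg : inv g ≠ g) : inv g * inv g = g * g := by
  by_contra hsq
  have e := H.coeff_anticomm g g (g * g)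
  rw [if_pos rfl, if_neg fun h => hg (mul_left_cancel h),
    if_neg fun h => hg (mul_right_cancel h), if_neg hsq] at e
  exact h2 (by linear_combination e)

theorem two_mul_sigma_sq [DecidableEq G] (H : IsSkewAnticomm inv σ) (h2 : (2 : R) ≠ 0) {g : G}
    (hg : inv g ≠ g) : 2 * (σ g : R) ^ 2 = -2 := by
  have e := H.coeff_anticomm g g (g * g)
  rw [if_pos rfl, if_neg fun h => hg (mul_left_cancel h),
    if_neg fun h => hg (mul_right_cancel h), if_pos (H.star_mul_star_self h2 hg)] at e
  linear_combination e

theorem sigma_eq_one_of_star_eq [DecidableEq G] [Nontrivial R] (H : IsSkewAnticomm inv σ)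
    (h2 : (2 : R) ≠ 0) {z g : G} (hz : inv z = z) (hσz : (σ z : R) = -1) (hg : inv g ≠ g) :
    (σ g : R) = 1 := by
  have e := H.coeff_anticomm_single hz hσz g (z * g)
  rw [if_pos rfl, if_neg fun h => hg (mul_left_cancel h)] at e
  by_cases hc : g * z = z * g
  · rw [if_pos hc, if_neg fun h => hg (mul_right_cancel (h.trans hc.symm))] at e
    exact absurd (by linear_combination e) h2
  · by_cases hc' : inv g * z = z * g
    · rw [if_neg hc, if_pos hc'] at e
      linear_combination -e
    · rw [if_neg hc, if_neg hc'] at e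
      exact absurd (by linear_combination e) one_ne_zero

theorem star_mul_eq_of_mul_eq (H : IsSkewAnticomm inv σ) {p q : G} (hconj : p * q = q * inv p) :
    inv (p * q) = p * inv q := by
  rw [hconj, H.inv_mul, H.inv_inv]

theorem star_mul_ne_mul_star (H : IsSkewAnticomm inv σ) {p q : G} (hconj : p * q = q * inv p)
    (hne : inv q * p ≠ p * q) : inv p * q ≠ p * inv q := fun h => hne <| by
  have h' := congrArg inv h
  rwa [H.inv_mul, H.inv_inv, H.inv_mul, H.inv_inv, ← hconj] at h'

/- Steps of the proof by contradiction of `star_mul_star_eq_of_mul_eq_mul_star`, whose conclusion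
`hstar_ne` negates. -/
section Twisted

variable [DecidableEq G] (H : IsSkewAnticomm inv σ) {p q : G} (hp : inv p ≠ p) (hq : inv q ≠ q)
  (hconj : p * q = q * inv p) (hstar_ne : inv p * inv q ≠ p * q) (hne : inv q * p ≠ p * q)
include H hp hq hconj hstar_ne hne

theorem sigma_eq_one_of_twisted : (σ p : R) = 1 := by
  have e := H.coeff_anticomm p q (p * q)
  rw [if_pos rfl, if_neg fun h => hq (mul_left_cancel h), if_neg fun h => hp (mul_right_cancel h),
    if_neg hstar_ne, if_neg fun h => hp (mul_left_cancel (h.trans hconj)).symm, if_pos hconj.symm,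
    if_neg hne, if_neg fun h => hq (mul_right_cancel (h.trans hconj))] at e
  linear_combination -e

theorem one_add_sigma_sq_of_twisted (h2 : (2 : R) ≠ 0) : 1 + (σ q : R) ^ 2 = 0 := by
  have e := H.coeff_anticomm (p * q) q (p * q * q)
  rw [H.star_mul_eq_of_mul_eq hconj, map_mul, Units.val_mul,
    H.sigma_eq_one_of_twisted hp hq hconj hstar_ne hne, one_mul] at e
  have n2 : p * q * inv q ≠ p * q * q := fun h => hq (mul_left_cancel h)
  have n3 : p * inv q * q ≠ p * q * q := fun h => hq (mul_left_cancel (mul_right_cancel h))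
  have y4 : p * inv q * inv q = p * q * q := by
    rw [mul_assoc, H.star_mul_star_self h2 hq, ← mul_assoc]
  have n5 : q * (p * q) ≠ p * q * q := fun h =>
    hp (mul_left_cancel ((mul_right_cancel (by rw [mul_assoc]; exact h)).trans hconj)).symm
  have n7 : inv q * (p * q) ≠ p * q * q := fun h =>
    hne (mul_right_cancel (by rw [mul_assoc]; exact h))
  rw [if_pos rfl, if_neg n2, if_neg n3, if_pos y4, if_neg n5, if_neg n7] at e
  have h4 := H.four_eq_zero hq
  have hsq := H.two_mul_sigma_sq h2 hq
  by_cases k1 : q * (p * inv q) = p * q * q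
  · have k2 : inv q * (p * inv q) ≠ p * q * q := fun h => hq (mul_right_cancel (h.trans k1.symm))
    rw [if_pos k1, if_neg k2] at e
    exact absurd ((Units.mul_left_eq_zero (σ q)).mp (by linear_combination -2 * e + hsq)) h2
  · rw [if_neg k1] at e
    by_cases k2 : inv q * (p * inv q) = p * q * q
    · rw [if_pos k2] at e
      exact absurd (by linear_combination 2 * e - (σ q : R) ^ 2 * h4) h2
    · rw [if_neg k2] at e
      linear_combination e

theorem star_mul_ne_of_twisted [Nontrivial R] : inv q * p ≠ p * inv q := by
  intro hc
  have e := H.coeff_anticomm p q (p * inv q)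
  have n5 : q * p ≠ p * inv q := fun h => hstar_ne <| by
    have h' := congrArg inv h
    rwa [H.inv_mul, H.inv_mul, H.inv_inv, ← hconj] at h'
  rw [if_neg fun h => hq (mul_left_cancel h).symm, if_pos rfl,
    if_neg (H.star_mul_ne_mul_star hconj hne),
    if_neg fun h => hp (mul_right_cancel h), if_neg n5,
    if_neg fun h => hq (mul_left_cancel (hconj.trans h)).symm, if_pos hc,
    if_pos ((H.inv_mul p q).symm.trans (H.star_mul_eq_of_mul_eq hconj)),
    H.sigma_eq_one_of_twisted hp hq hconj hstar_ne hne] at e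
  exact (σ q).ne_zero (by linear_combination -e)

theorem mul_eq_star_mul_of_twisted [Nontrivial R] (h2 : (2 : R) ≠ 0) : q * p = inv p * q := by
  by_contra hc
  have e := H.coeff_anticomm p q (inv p * q)
  have n8 : inv q * inv p ≠ inv p * q := fun h => H.star_mul_ne_mul_star hconj hne
    (h.symm.trans ((H.inv_mul p q).symm.trans (H.star_mul_eq_of_mul_eq hconj)))
  rw [if_neg fun h => hp (mul_right_cancel h).symm, if_neg (H.star_mul_ne_mul_star hconj hne).symm,
    if_pos rfl, if_neg fun h => hq (mul_left_cancel h), if_neg hc,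
    if_neg fun h => hp (mul_right_cancel (hconj.trans h)).symm, if_neg n8,
    H.sigma_eq_one_of_twisted hp hq hconj hstar_ne hne] at e
  have hσq := H.one_add_sigma_sq_of_twisted hp hq hconj hstar_ne hne h2
  by_cases hc' : inv q * p = inv p * q
  · rw [if_pos hc'] at e
    exact h2 (by linear_combination hσq - (1 - (σ q : R)) * e)
  · rw [if_neg hc'] at e
    exact one_ne_zero (by linear_combination -e)

end Twisted

theorem star_mul_star_eq_of_mul_eq_mul_star [DecidableEq G] [Nontrivial R]
    (H : IsSkewAnticomm inv σ) (h2 : (2 : R) ≠ 0) {p q : G} (hp : inv p ≠ p) (hq : inv q ≠ q)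
    (hconj : p * q = q * inv p) (hne : inv q * p ≠ p * q) : inv p * inv q = p * q := by
  by_contra hstar_ne
  have hσp := H.sigma_eq_one_of_twisted hp hq hconj hstar_ne hne
  have hne_star := H.star_mul_ne_of_twisted hp hq hconj hstar_ne hne
  have hconj' := H.mul_eq_star_mul_of_twisted hp hq hconj hstar_ne hne h2
  have hpq := H.star_mul_eq_of_mul_eq hconj
  have hpq_ne : inv (p * q) ≠ p * q := by
    rw [hpq]; exact fun h => hq (mul_left_cancel h)
  have hcomm_pq : inv q * (p * q) = q * (p * inv q) := mul_left_cancel (a := p) <| by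
    simpa only [hpq, mul_assoc] using H.star_mul_self_comm h2 hpq_ne
  have hsq_pq : inv q * (p * inv q) = q * (p * q) := mul_left_cancel (a := p) <| by
    simpa only [hpq, mul_assoc] using H.star_mul_star_self h2 hpq_ne
  have hqp : inv (q * p) = inv q * p := by
    rw [hconj', H.inv_mul, H.inv_inv]
  have e := H.coeff_anticomm (q * p) q (q * (inv q * p))
  rw [hqp, map_mul, Units.val_mul, hσp, mul_one] at e
  rw [if_neg fun h => hne (mul_left_cancel (by simpa only [mul_assoc] using h)).symm,
    if_neg fun h => hne_star (mul_left_cancel (by simpa only [mul_assoc] using h)).symm,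
    if_neg fun h => hne_star (mul_left_cancel (by simpa only [mul_assoc, hcomm_pq] using h)).symm,
    if_neg fun h => hne (mul_left_cancel (by simpa only [mul_assoc, hsq_pq] using h)).symm,
    if_neg fun h => hq (mul_right_cancel (mul_left_cancel h)).symm, if_pos rfl,
    if_pos (by rw [← mul_assoc, H.star_mul_self_comm h2 hq, mul_assoc]),
    if_neg fun h => hq (mul_left_cancel (mul_right_cancel
      (by simpa only [← mul_assoc, H.star_mul_star_self h2 hq] using h))).symm] at e
  exact h2 ((Units.mul_left_eq_zero (σ q)).mp (by linear_combination -e))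

theorem star_mul_star_eq_of_mul_star_eq_of_star_mul_eq [DecidableEq G] (H : IsSkewAnticomm inv σ)
    (h2 : (2 : R) ≠ 0) {x y : G} (hx : inv x ≠ x) (hy : inv y ≠ y)
    (hconj : y * inv x = x * y) (hconj' : inv y * x = x * y) : inv x * inv y = x * y := by
  by_contra hstar_ne
  have e := H.coeff_anticomm x y (x * y)
  rw [if_pos rfl, if_neg fun h => hy (mul_left_cancel h),
    if_neg fun h => hx (mul_right_cancel h), if_neg hstar_ne,
    if_neg fun h => hx (mul_left_cancel (h.trans hconj.symm)).symm, if_pos hconj, if_pos hconj',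
    if_neg fun h => hy (mul_right_cancel (h.trans hconj.symm))] at e
  have hx2 := H.two_mul_sigma_sq h2 hx
  have hy2 := H.two_mul_sigma_sq h2 hy
  refine h2 ?_
  linear_combination 2 * ((σ x : R) + 1 - σ y) * e + (σ y : R) * H.four_eq_zero hx + hx2 - hy2

theorem star_mul_star_eq_mul [DecidableEq G] [Nontrivial R] (H : IsSkewAnticomm inv σ)
    (h2 : (2 : R) ≠ 0) {x y : G} (hx : inv x ≠ x) (hy : inv y ≠ y) :
    inv x * inv y = x * y := by
  by_cases hconj : y * inv x = x * y
  · by_cases hconj' : inv y * x = x * y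
    · exact H.star_mul_star_eq_of_mul_star_eq_of_star_mul_eq h2 hx hy hconj hconj'
    · exact H.star_mul_star_eq_of_mul_eq_mul_star h2 hx hy hconj.symm hconj'
  by_contra hstar_ne
  have e := H.coeff_anticomm x y (x * y)
  rw [if_pos rfl, if_neg fun h => hy (mul_left_cancel h), if_neg fun h => hx (mul_right_cancel h),
    if_neg hstar_ne, if_neg hconj] at e
  by_cases hcomm : y * x = x * y
  · have n7 : inv y * x ≠ x * y := fun h => hy (mul_right_cancel (h.trans hcomm.symm))
    have n8 : inv y * inv x ≠ x * y := fun h =>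
      hstar_ne (by rwa [← H.inv_mul, hcomm, H.inv_mul])
    rw [if_pos hcomm, if_neg n7, if_neg n8] at e
    exact h2 (by linear_combination e)
  by_cases hconj' : inv y * x = x * y
  · have hyy : inv (inv y) ≠ inv y := by rw [H.inv_inv]; exact hy.symm
    have hconj_y : inv y * x = x * inv (inv y) := by rw [H.inv_inv, hconj']
    refine hconj ?_
    simpa only [H.inv_inv, hconj'] using
      H.star_mul_star_eq_of_mul_eq_mul_star h2 hyy hx hconj_y (hconj' ▸ hstar_ne)
  by_cases hsym : inv y * inv x = x * y
  · rw [if_neg hcomm, if_neg hconj', if_pos hsym] at e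
    have hz : inv (x * y) = x * y := (H.inv_mul x y).trans hsym
    have hσz : (σ (x * y) : R) = -1 := by
      rw [map_mul, Units.val_mul]; linear_combination e
    have hσx := H.sigma_eq_one_of_star_eq h2 hz hσz hx
    have hσy := H.sigma_eq_one_of_star_eq h2 hz hσz hy
    rw [hσx, hσy] at e
    exact h2 (by linear_combination e)
  · rw [if_neg hcomm, if_neg hconj', if_neg hsym] at e
    exact one_ne_zero (by linear_combination e)

end IsSkewAnticomm

theorem MonoidHom.nontrivial_of_ne_one {M : Type} [Monoid M] {σ : M →* Rˣ} (hσ : σ ≠ 1) :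
    Nontrivial R := by
  by_contra hR
  rw [not_nontrivial_iff_subsingleton] at hR
  exact hσ (MonoidHom.ext fun g => Subsingleton.elim _ _)

theorem stmt10 {R : Type} [CommRing R] (hchar : ringChar R ≠ 2) {G : Type} [Group G]
    (inv : G → G) (hmul : ∀ x y : G, inv (x * y) = inv y * inv x)
    (hinv : ∀ x : G, inv (inv x) = x) (σ : G →* Rˣ) (hnt : σ ≠ 1)
    (hcompat : ∀ x : G, x * inv x ∈ σ.ker)
    (hanti : ∀ α ∈ skewSet inv σ, ∀ β ∈ skewSet inv σ, α * β + β * α = 0)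
    (x y : G) (hx : inv x ≠ x) (hy : inv y ≠ y) :
    ((y⁻¹ * x * y = x ∨ y⁻¹ * x * y = inv x) ∧ x * y = inv x * inv y) ∧
    (inv (x * y) = x * y ↔ x * y = y * x) := by
  classical
  have := MonoidHom.nontrivial_of_ne_one hnt
  have h2 : (2 : R) ≠ 0 := Ring.two_ne_zero hchar
  have H : IsSkewAnticomm inv σ := ⟨hmul, hinv, hcompat, hanti⟩
  have hD := H.star_mul_star_eq_mul h2 hx hy
  have hstar : inv (x * y) = y * x := by rw [← hD, hmul, hinv, hinv]
  refine ⟨⟨?_, hD.symm⟩, by rw [hstar, eq_comm]⟩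
  by_cases hsym : inv (x * y) = x * y
  · left
    rw [mul_assoc, ← hsym, hstar, ← mul_assoc, inv_mul_cancel, one_mul]
  · right
    have h := H.star_mul_star_eq_mul h2 hx hsym
    rw [hmul, ← mul_assoc, hD, mul_assoc] at h
    rw [mul_assoc, ← mul_left_cancel h, ← mul_assoc, inv_mul_cancel, one_mul]
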